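/- (Theorem 7(i), deterministic core.) Let s* ≤ 1 and let F be a non-degenerate continuous distribution function that is NOT bi-s*-concave. Let (L_n) and (U_n) be sequences of nondecreasing functions ℝ → [0,1] such that for every x ∈ ℝ, L_n(x) → F(x) and U_n(x) → F(x) as n → ∞. Then there exists N such that for all n ≥ N there is no bi-s*-concave distribution function G with L_n(x) ≤ G(x) ≤ U_n(x) for all x ∈ ℝ. -/

import Mathlib

open Set MeasureTheory Filter
open scoped NNReal ENNReal

/-- A (cumulative) distribution function on `ℝ`: nondecreasing, `[0,1]`-valued,
right-continuous, with limit `0` at `-∞` and `1` at `+∞`. -/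
def IsDistFun (F : ℝ → ℝ) : Prop :=
  Monotone F ∧ (∀ x, 0 ≤ F x ∧ F x ≤ 1) ∧
  (∀ x, ContinuousWithinAt F (Ici x) x) ∧
  Tendsto F atBot (nhds 0) ∧ Tendsto F atTop (nhds 1)

/-- `F` is non-degenerate: it takes a value strictly between 0 and 1. -/
def NonDeg (F : ℝ → ℝ) : Prop := ∃ x, 0 < F x ∧ F x < 1

/-- `J(F) = {x : 0 < F x < 1}`. -/
def JSet (F : ℝ → ℝ) : Set ℝ := {x | 0 < F x ∧ F x < 1}

/-- `F` is bi-`s*`-concave: `F` is continuous on `ℝ` and, on `J(F)`,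
for `s* < 0` both `F ^ s*` and `(1 - F) ^ s*` are convex; for `s* = 0` both
`log F` and `log (1 - F)` are concave; for `s* > 0` both `F ^ s*` and
`(1 - F) ^ s*` are concave. -/
def IsBiSStarConcave (s : ℝ) (F : ℝ → ℝ) : Prop :=
  Continuous F ∧
  (s < 0 → ConvexOn ℝ (JSet F) (fun x => F x ^ s) ∧
    ConvexOn ℝ (JSet F) (fun x => (1 - F x) ^ s)) ∧
  (s = 0 → ConcaveOn ℝ (JSet F) (fun x => Real.log (F x)) ∧
    ConcaveOn ℝ (JSet F) (fun x => Real.log (1 - F x))) ∧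
  (0 < s → ConcaveOn ℝ (JSet F) (fun x => F x ^ s) ∧
    ConcaveOn ℝ (JSet F) (fun x => (1 - F x) ^ s))


/-! A bracket `L n ≤ G ≤ U n` squeezes any fitting `G` onto `F` pointwise. If fits existed for
infinitely many `n`, the fitted bi-`s*`-concave functions along a subsequence would converge
pointwise to `F`. Convexity and concavity inequalities survive pointwise limits, every point of
`J(F)` eventually lies in `J(G)`, and the transforms `t ^ s*`, `log t`, `(1 - t) ^ s*`,
`log (1 - t)` are continuous on `(0, 1)`; so the continuous `F` would itself be bi-`s*`-concave. -/

open Topology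

section Limits

variable {ι : Type*} {l : Filter ι} {F : ℝ → ℝ} {G : ι → ℝ → ℝ} {f : ℝ → ℝ}

theorem convex_JSet (hF : Monotone F) : Convex ℝ (JSet F) :=
  (ordConnected_Ioo.preimage_mono hF).convex

theorem eventually_mem_JSet (hG : ∀ x, Tendsto (fun n => G n x) l (𝓝 (F x))) {x : ℝ}
    (hx : x ∈ JSet F) :
    ∀ᶠ n in l, x ∈ JSet (G n) :=
  (hG x).eventually (Ioo_mem_nhds hx.1 hx.2)

theorem tendsto_comp_of_mem_JSet (hG : ∀ x, Tendsto (fun n => G n x) l (𝓝 (F x)))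
    (hf : ContinuousOn f (Ioo 0 1)) {x : ℝ} (hx : x ∈ JSet F) :
    Tendsto (fun n => f (G n x)) l (𝓝 (f (F x))) :=
  (hf.continuousAt (Ioo_mem_nhds hx.1 hx.2)).tendsto.comp (hG x)

variable [l.NeBot] {E : Type*} [AddCommGroup E] [Module ℝ E]
  {S : Set E} {T : ι → Set E} {φ : ι → E → ℝ} {ψ : E → ℝ}

theorem ConvexOn.of_tendsto (hS : Convex ℝ S) (hφ : ∀ n, ConvexOn ℝ (T n) (φ n))
    (hST : ∀ x ∈ S, ∀ᶠ n in l, x ∈ T n)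
    (hψ : ∀ x ∈ S, Tendsto (fun n => φ n x) l (𝓝 (ψ x))) : ConvexOn ℝ S ψ := by
  refine ⟨hS, fun x hx y hy a b ha hb hab => ?_⟩
  refine le_of_tendsto_of_tendsto (hψ _ (hS hx hy ha hb hab))
    (((hψ x hx).const_smul a).add ((hψ y hy).const_smul b)) ?_
  filter_upwards [hST x hx, hST y hy] with n hxn hyn
  exact (hφ n).2 hxn hyn ha hb hab

theorem ConcaveOn.of_tendsto (hS : Convex ℝ S) (hφ : ∀ n, ConcaveOn ℝ (T n) (φ n))
    (hST : ∀ x ∈ S, ∀ᶠ n in l, x ∈ T n)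
    (hψ : ∀ x ∈ S, Tendsto (fun n => φ n x) l (𝓝 (ψ x))) : ConcaveOn ℝ S ψ := by
  rw [← neg_convexOn_iff]
  exact ConvexOn.of_tendsto hS (fun n => (hφ n).neg) hST fun x hx => (hψ x hx).neg

theorem convexOn_JSet_of_tendsto (hF : Monotone F)
    (hG : ∀ x, Tendsto (fun n => G n x) l (𝓝 (F x))) (hf : ContinuousOn f (Ioo 0 1))
    (hGf : ∀ n, ConvexOn ℝ (JSet (G n)) (fun x => f (G n x))) :
    ConvexOn ℝ (JSet F) (fun x => f (F x)) :=
  ConvexOn.of_tendsto (convex_JSet hF) hGf (fun _ => eventually_mem_JSet hG)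
    fun _ => tendsto_comp_of_mem_JSet hG hf

theorem concaveOn_JSet_of_tendsto (hF : Monotone F)
    (hG : ∀ x, Tendsto (fun n => G n x) l (𝓝 (F x))) (hf : ContinuousOn f (Ioo 0 1))
    (hGf : ∀ n, ConcaveOn ℝ (JSet (G n)) (fun x => f (G n x))) :
    ConcaveOn ℝ (JSet F) (fun x => f (F x)) :=
  ConcaveOn.of_tendsto (convex_JSet hF) hGf (fun _ => eventually_mem_JSet hG)
    fun _ => tendsto_comp_of_mem_JSet hG hf

theorem IsBiSStarConcave.of_tendsto {s : ℝ} (hF : Monotone F) (hcont : Continuous F)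
    (hGs : ∀ n, IsBiSStarConcave s (G n)) (hG : ∀ x, Tendsto (fun n => G n x) l (𝓝 (F x))) :
    IsBiSStarConcave s F := by
  have hcompl : ContinuousOn (fun t : ℝ => 1 - t) (Ioo 0 1) := by fun_prop
  have hpow : ContinuousOn (fun t : ℝ => t ^ s) (Ioo 0 1) :=
    continuousOn_id.rpow_const fun t ht => Or.inl ht.1.ne'
  have hpow_compl : ContinuousOn (fun t : ℝ => (1 - t) ^ s) (Ioo 0 1) :=
    hcompl.rpow_const fun t ht => Or.inl (sub_pos.2 ht.2).ne'
  have hlog : ContinuousOn Real.log (Ioo 0 1) :=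
    Real.continuousOn_log.mono fun t ht => ht.1.ne'
  have hlog_compl : ContinuousOn (fun t : ℝ => Real.log (1 - t)) (Ioo 0 1) :=
    hcompl.log fun t ht => (sub_pos.2 ht.2).ne'
  refine ⟨hcont, fun hs => ⟨?_, ?_⟩, fun hs => ⟨?_, ?_⟩, fun hs => ⟨?_, ?_⟩⟩
  · exact convexOn_JSet_of_tendsto hF hG hpow fun n => ((hGs n).2.1 hs).1
  · exact convexOn_JSet_of_tendsto hF hG hpow_compl fun n => ((hGs n).2.1 hs).2
  · exact concaveOn_JSet_of_tendsto hF hG hlog fun n => ((hGs n).2.2.1 hs).1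
  · exact concaveOn_JSet_of_tendsto hF hG hlog_compl fun n => ((hGs n).2.2.1 hs).2
  · exact concaveOn_JSet_of_tendsto hF hG hpow fun n => ((hGs n).2.2.2 hs).1
  · exact concaveOn_JSet_of_tendsto hF hG hpow_compl fun n => ((hGs n).2.2.2 hs).2

end Limits

theorem eventually_no_biSStarConcave_fits_general
    (s : ℝ)
    (F : ℝ → ℝ) (hF : IsDistFun F) (hcont : Continuous F)
    (hnotbi : ¬ IsBiSStarConcave s F)
    (L U : ℕ → ℝ → ℝ)
    (hLconv : ∀ x, Tendsto (fun n => L n x) atTop (nhds (F x)))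
    (hUconv : ∀ x, Tendsto (fun n => U n x) atTop (nhds (F x))) :
    ∃ N : ℕ, ∀ n ≥ N,
      ¬ ∃ G : ℝ → ℝ, IsDistFun G ∧ IsBiSStarConcave s G ∧
        ∀ x, L n x ≤ G x ∧ G x ≤ U n x := by
  by_contra! hfits
  obtain ⟨φ, hφ, hfit⟩ := extraction_of_frequently_atTop (frequently_atTop.2 hfits)
  choose G _ hGs hGLU using hfit
  have hG : ∀ x, Tendsto (fun k => G k x) atTop (𝓝 (F x)) := fun x =>
    tendsto_of_tendsto_of_tendsto_of_le_of_le ((hLconv x).comp hφ.tendsto_atTop)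
      ((hUconv x).comp hφ.tendsto_atTop) (fun k => (hGLU k x).1) fun k => (hGLU k x).2
  exact hnotbi (IsBiSStarConcave.of_tendsto hF.1 hcont hGs hG)

/-- Theorem 7(i), deterministic core: if the continuous non-degenerate
distribution function `F` is not bi-`s*`-concave and `L n`, `U n` are nondecreasing
`[0,1]`-valued functions converging pointwise to `F`, then eventually no bi-`s*`-concave
distribution function fits between `L n` and `U n`. -/
theorem eventually_no_biSStarConcave_fits
    (s : ℝ) (hs : s ≤ 1)
    (F : ℝ → ℝ) (hF : IsDistFun F) (hcont : Continuous F) (hnd : NonDeg F)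
    (hnotbi : ¬ IsBiSStarConcave s F)
    (L U : ℕ → ℝ → ℝ)
    (hLmono : ∀ n, Monotone (L n)) (hUmono : ∀ n, Monotone (U n))
    (hL01 : ∀ n x, 0 ≤ L n x ∧ L n x ≤ 1) (hU01 : ∀ n x, 0 ≤ U n x ∧ U n x ≤ 1)
    (hLconv : ∀ x, Tendsto (fun n => L n x) atTop (nhds (F x)))
    (hUconv : ∀ x, Tendsto (fun n => U n x) atTop (nhds (F x))) :
    ∃ N : ℕ, ∀ n ≥ N,
      ¬ ∃ G : ℝ → ℝ, IsDistFun G ∧ IsBiSStarConcave s G ∧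
        ∀ x, L n x ≤ G x ∧ G x ≤ U n x :=
  eventually_no_biSStarConcave_fits_general s F hF hcont hnotbi L U hLconv hUconv
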